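/- Let g = h ⊕ ⊕_{α∈Δ} Cx_α be the Lie algebra sl₃ constructed from the A₂ root system with structure constants given by the cocycle ε (ε(α₁,α₂)=1, ε(α₂,α₁)=-1). Define ν̂ on g by ν̂(h) = ν(h) on the Cartan and ν̂(x_{α₁}) = i x_{α₂}, ν̂(x_{α₂}) = i x_{α₁}, ν̂(x_{α₁+α₂}) = x_{α₁+α₂}, ν̂(x_{-α₁}) = -i x_{-α₂}, ν̂(x_{-α₂}) = -i x_{-α₁}, ν̂(x_{-α₁-α₂}) = x_{-α₁-α₂}. Then ν̂⁴ = 1 but ν̂² ≠ 1 (indeed ν̂² = -1 on the root vectors x_{±α₁}, x_{±α₂}). -/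

import Mathlib

open Complex

/-- The automorphism ν̂ of g = sl₃ in coordinates with respect to the ordered basis
(α₁, α₂, x_{α₁}, x_{α₂}, x_{-α₁}, x_{-α₂}, x_{α₁+α₂}, x_{-α₁-α₂}). -/
noncomputable def nuHat (v : Fin 8 → ℂ) : Fin 8 → ℂ :=
  ![v 1, v 0, Complex.I * v 3, Complex.I * v 2,
    -Complex.I * v 5, -Complex.I * v 4, v 6, v 7]

/-- Standard basis vectors of g in coordinates. -/
noncomputable def gBasis (j : Fin 8) : Fin 8 → ℂ := Pi.single j 1

/-- ν̂² is diagonal: the coefficients `i` and `-i` of ν̂ pair up to `i * i = (-i) * (-i) = -1` on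
`x_{±α₁}, x_{±α₂}`, while the Cartan and `x_{±(α₁+α₂)}` are fixed. -/
def nuHatSqSign : Fin 8 → ℂ := ![1, 1, -1, -1, -1, -1, 1, 1]

theorem nuHat_nuHat (v : Fin 8 → ℂ) : nuHat (nuHat v) = nuHatSqSign * v := by
  funext i
  fin_cases i <;> simp [nuHat, nuHatSqSign, ← mul_assoc]

theorem nuHatSqSign_mul_self : nuHatSqSign * nuHatSqSign = 1 := by
  funext i
  fin_cases i <;> simp [nuHatSqSign]

theorem nuHat_nuHat_gBasis (j : Fin 8) :
    nuHat (nuHat (gBasis j)) = nuHatSqSign j • gBasis j := by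
  rw [nuHat_nuHat, gBasis, ← Pi.single_mul_right, ← smul_eq_mul, Pi.single_smul']

theorem nuHat_nuHat_gBasis_of_sign_neg {j : Fin 8} (hj : nuHatSqSign j = -1) :
    nuHat (nuHat (gBasis j)) = -gBasis j := by
  rw [nuHat_nuHat_gBasis, hj, neg_one_smul]

theorem stmt11 :
    (nuHat ∘ nuHat ∘ nuHat ∘ nuHat) = id ∧
    (nuHat ∘ nuHat) ≠ id ∧
    nuHat (nuHat (gBasis 2)) = -(gBasis 2) ∧
    nuHat (nuHat (gBasis 3)) = -(gBasis 3) ∧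
    nuHat (nuHat (gBasis 4)) = -(gBasis 4) ∧
    nuHat (nuHat (gBasis 5)) = -(gBasis 5) := by
  have h2 := nuHat_nuHat_gBasis_of_sign_neg (j := 2) rfl
  refine ⟨?_, ?_, h2, nuHat_nuHat_gBasis_of_sign_neg rfl, nuHat_nuHat_gBasis_of_sign_neg rfl,
    nuHat_nuHat_gBasis_of_sign_neg rfl⟩
  · funext v
    simp only [Function.comp_apply, nuHat_nuHat, ← mul_assoc, nuHatSqSign_mul_self, one_mul, id]
  · intro h
    have h2_at_2 := congrFun (h2.symm.trans (congrFun h (gBasis 2))) 2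
    norm_num [gBasis] at h2_at_2
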